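/- arXiv:2308.09645 — 2 statements merged into one kernel-verified Lean document; each statement's English description precedes it below -/
import Mathlib

section
/- For any finite connected simple graphs G and H, dmg(G □ H) ≤ max{ dmg(G)·|V(H)| , (dmg(H)+1)·|V(G)| }. -/
open SimpleGraph

/-!
Formalization of the game of Cops and Robber (one cop, one robber) and the damage number.

Round 0: the cop chooses a starting vertex, then the robber chooses a starting vertex.
In each subsequent round the cop moves to an adjacent vertex or passes, after which the
robber moves to an adjacent vertex or passes.  Strategies are modelled as functions of
the full history of positions (most recent first).
-/

/-- A cop strategy: an initial vertex together with a move function taking the history of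
cop positions (most recent first, nonempty) and of robber positions (most recent first)
to the cop's next position. -/
structure CopStrategy (V : Type*) where
  init : V
  move : List V → List V → V

/-- A robber strategy: an initial vertex chosen in response to the cop's initial vertex,
together with a move function taking the history of cop positions (most recent first,
including the cop's move from the current round) and of robber positions (most recent
first) to the robber's next position. -/
structure RobberStrategy (V : Type*) where
  init : V → V
  move : List V → List V → V

variable {V : Type*}

/-- A cop move function is legal for `G` if from any position it either passes or
moves along an edge of `G`. -/
def LegalCopMove (G : SimpleGraph V) (cs : List V → List V → V) : Prop :=
  ∀ (c : V) (ch rh : List V), cs (c :: ch) rh = c ∨ G.Adj c (cs (c :: ch) rh)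

/-- A robber move function is legal for `G` if from any position it either passes or
moves along an edge of `G`. -/
def LegalRobMove (G : SimpleGraph V) (rs : List V → List V → V) : Prop :=
  ∀ (r : V) (ch rh : List V), rs ch (r :: rh) = r ∨ G.Adj r (rs ch (r :: rh))

/-- A legal cop strategy: every move passes or goes along an edge. -/
def CopStrategy.Legal (G : SimpleGraph V) (CS : CopStrategy V) : Prop :=
  LegalCopMove G CS.move

/-- A legal robber strategy: every move passes or goes along an edge. -/
def RobberStrategy.Legal (G : SimpleGraph V) (RS : RobberStrategy V) : Prop :=
  LegalRobMove G RS.move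

/-- `play CS RS n = (cₙ, rₙ, earlier cop positions, earlier robber positions)`:
the state of the game after round `n`, when the cop plays `CS` and the robber plays `RS`.
In each round the cop moves first, then the robber moves. -/
def play (CS : CopStrategy V) (RS : RobberStrategy V) : ℕ → V × V × List V × List V
  | 0 => (CS.init, RS.init CS.init, [], [])
  | n + 1 =>
    let p := play CS RS n
    let c := CS.move (p.1 :: p.2.2.1) (p.2.1 :: p.2.2.2)
    let r := RS.move (c :: p.1 :: p.2.2.1) (p.2.1 :: p.2.2.2)
    (c, r, p.1 :: p.2.2.1, p.2.1 :: p.2.2.2)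

/-- The cop's position after its move in round `n`. -/
def copPos (CS : CopStrategy V) (RS : RobberStrategy V) (n : ℕ) : V := (play CS RS n).1

/-- The robber's position after its move in round `n`. -/
def robPos (CS : CopStrategy V) (RS : RobberStrategy V) (n : ℕ) : V := (play CS RS n).2.1

/-- The robber damages `v`: at the end of some round `n` the robber occupies `v`, having
never been captured up to that point (neither by moving onto the cop, nor by the cop's
move in any round up to and including round `n + 1`); it then passes or moves in
round `n + 1`, damaging `v`. -/
def Damages (CS : CopStrategy V) (RS : RobberStrategy V) (v : V) : Prop :=
  ∃ n, robPos CS RS n = v ∧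
    ∀ k ≤ n, copPos CS RS k ≠ robPos CS RS k ∧ copPos CS RS (k + 1) ≠ robPos CS RS k

/-- The set of vertices damaged by the robber during the play of `CS` against `RS`. -/
def damageSet (CS : CopStrategy V) (RS : RobberStrategy V) : Set V :=
  {v | Damages CS RS v}

/-- The damage number of `G`: the minimum over legal cop strategies of the maximum over
legal robber strategies of the number of distinct damaged vertices. -/
noncomputable def dmg (G : SimpleGraph V) : ℕ :=
  sInf { n | ∃ CS : CopStrategy V, CS.Legal G ∧
    ∀ RS : RobberStrategy V, RS.Legal G → (damageSet CS RS).ncard ≤ n }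

/-- A cop strategy passes during the first round. -/
def CopStrategy.PassesFirst (CS : CopStrategy V) : Prop :=
  ∀ r : V, CS.move [CS.init] [r] = CS.init

/-- The damage number of `G` when the cop is required to pass during the first round. -/
noncomputable def dmg' (G : SimpleGraph V) : ℕ :=
  sInf { n | ∃ CS : CopStrategy V, CS.Legal G ∧ CS.PassesFirst ∧
    ∀ RS : RobberStrategy V, RS.Legal G → (damageSet CS RS).ncard ≤ n }

/-- The eccentricity of a vertex: the maximum distance from `u` to any vertex. -/
noncomputable def ecc (G : SimpleGraph V) (u : V) : ℕ := sSup (Set.range (G.dist u))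

/-- The radius of a graph: the minimum eccentricity over all vertices. -/
noncomputable def gRadius (G : SimpleGraph V) : ℕ := sInf (Set.range (ecc G))

/-!
The cop on `G □ H` simulates two games. In the game on `G` the robber follows the `G`-coordinate
of the real robber, moving in the rounds where the real robber moves along `G`; in the game on
`H` the robber follows the `H`-coordinate, moving in the other rounds (where the real robber
passes or moves along `H`), and it only enters that game at the first such round. In each
simulation the cop plays an optimal strategy until the simulated robber is caught, and from then
on it copies the robber's coordinate. Only one simulation advances per round, so this is a legal
strategy on `G □ H`, and the real robber is caught as soon as both simulations are over.

Hence a vertex is damaged only while the simulation that ends last is still running, so its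
coordinate in that factor is damaged in that simulation, or, for `H`, is the robber's initial
`H`-coordinate. This gives at most `dmg G * |V(H)|` resp. `(dmg H + 1) * |V(G)|` damaged vertices.
-/

section Game

variable {W : Type*}

def hist (y : ℕ → W) : ℕ → List W
  | 0 => []
  | n + 1 => y n :: hist y n

@[simp] lemma hist_succ (y : ℕ → W) (n : ℕ) : hist y (n + 1) = y n :: hist y n := rfl

@[simp] lemma length_hist (y : ℕ → W) (n : ℕ) : (hist y n).length = n := by
  induction n with
  | zero => rfl
  | succ n ih => simp [ih]

lemma getD_reverse_hist (y : ℕ → W) {j n : ℕ} (hj : j < n) (d : W) :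
    (hist y n).reverse.getD j d = y j := by
  induction n with
  | zero => omega
  | succ n ih =>
    rcases Nat.lt_succ_iff_lt_or_eq.mp hj with hj | rfl
    · rw [← ih hj, hist_succ, List.reverse_cons, List.getD_append _ _ _ _ (by simpa using hj)]
    · simp

lemma play_hist (CS : CopStrategy W) (RS : RobberStrategy W) (k : ℕ) :
    (play CS RS k).2.2 = (hist (copPos CS RS) k, hist (robPos CS RS) k) := by
  induction k with
  | zero => rfl
  | succ k ih =>
    simp only [play, hist_succ, congrArg Prod.fst ih, congrArg Prod.snd ih]
    rfl

lemma copPos_succ (CS : CopStrategy W) (RS : RobberStrategy W) (k : ℕ) :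
    copPos CS RS (k + 1) =
      CS.move (hist (copPos CS RS) (k + 1)) (hist (robPos CS RS) (k + 1)) := by
  show CS.move ((play CS RS k).1 :: (play CS RS k).2.2.1)
    ((play CS RS k).2.1 :: (play CS RS k).2.2.2) = _
  rw [play_hist]
  rfl

lemma robPos_succ (CS : CopStrategy W) (RS : RobberStrategy W) (k : ℕ) :
    robPos CS RS (k + 1) =
      RS.move (hist (copPos CS RS) (k + 2)) (hist (robPos CS RS) (k + 1)) := by
  show RS.move (copPos CS RS (k + 1) :: (play CS RS k).1 :: (play CS RS k).2.2.1)
    ((play CS RS k).2.1 :: (play CS RS k).2.2.2) = _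
  rw [play_hist]
  rfl

lemma copPos_succ_eq_or_adj {G : SimpleGraph W} {CS : CopStrategy W} (hCS : CS.Legal G)
    (RS : RobberStrategy W) (k : ℕ) :
    copPos CS RS (k + 1) = copPos CS RS k ∨ G.Adj (copPos CS RS k) (copPos CS RS (k + 1)) := by
  rw [copPos_succ, hist_succ]
  exact hCS _ _ _

lemma robPos_succ_eq_or_adj {G : SimpleGraph W} (CS : CopStrategy W) {RS : RobberStrategy W}
    (hRS : RS.Legal G) (k : ℕ) :
    robPos CS RS (k + 1) = robPos CS RS k ∨ G.Adj (robPos CS RS k) (robPos CS RS (k + 1)) := by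
  rw [robPos_succ, hist_succ _ k]
  exact hRS _ _ _

def CaughtAt (CS : CopStrategy W) (RS : RobberStrategy W) (i : ℕ) : Prop :=
  copPos CS RS i = robPos CS RS i ∨ copPos CS RS (i + 1) = robPos CS RS i

lemma damages_iff (CS : CopStrategy W) (RS : RobberStrategy W) (v : W) :
    Damages CS RS v ↔ ∃ n, robPos CS RS n = v ∧ ∀ i ≤ n, ¬CaughtAt CS RS i := by
  simp only [Damages, CaughtAt, not_or]

open Classical in
noncomputable def replay (G : SimpleGraph W) (y : ℕ → W) : RobberStrategy W where
  init _ := y 0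
  move _ rh := match rh with
    | [] => y 0
    | r :: t => if y (t.length + 1) = r ∨ G.Adj r (y (t.length + 1)) then y (t.length + 1) else r

open Classical in
lemma replay_move_cons (G : SimpleGraph W) (y : ℕ → W) (ch : List W) (r : W) (t : List W) :
    (replay G y).move ch (r :: t) =
      if y (t.length + 1) = r ∨ G.Adj r (y (t.length + 1)) then y (t.length + 1) else r :=
  rfl

lemma replay_legal (G : SimpleGraph W) (y : ℕ → W) : (replay G y).Legal G := by
  intro r _ t
  rw [replay_move_cons]
  split_ifs with h
  · exact h
  · exact Or.inl rfl

lemma robPos_replay {G : SimpleGraph W} {y : ℕ → W}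
    (hy : ∀ j, y (j + 1) = y j ∨ G.Adj (y j) (y (j + 1))) (CS : CopStrategy W) (k : ℕ) :
    robPos CS (replay G y) k = y k := by
  induction k with
  | zero => rfl
  | succ k ih =>
    rw [robPos_succ, hist_succ (robPos _ _), replay_move_cons, length_hist, ih, if_pos (hy k)]

lemma play_replay_congr (G : SimpleGraph W) (CS : CopStrategy W) {y y' : ℕ → W} {k : ℕ}
    (h : ∀ i ≤ k, y i = y' i) : play CS (replay G y) k = play CS (replay G y') k := by
  induction k with
  | zero => simp [play, replay, h 0 le_rfl]
  | succ k ih =>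
    rw [play, play, ih fun i hi => h i (by omega)]
    simp only [play_hist, replay_move_cons]
    rw [length_hist, h (k + 1) le_rfl]

end Game

section Shadow

variable {W : Type*} {G : SimpleGraph W} (CS : CopStrategy W)

lemma copPos_replay_congr {y y' : ℕ → W} {k : ℕ} (h : ∀ i < k, y i = y' i) :
    copPos CS (replay G y) k = copPos CS (replay G y') k := by
  cases k with
  | zero => rfl
  | succ k =>
    show CS.move ((play CS (replay G y) k).1 :: (play CS (replay G y) k).2.2.1)
      ((play CS (replay G y) k).2.1 :: (play CS (replay G y) k).2.2.2) = _
    rw [play_replay_congr G CS fun i hi => h i (by omega)]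
    rfl

lemma caughtAt_replay_congr {y y' : ℕ → W} {i : ℕ} (h : ∀ j ≤ i, y j = y' j) :
    CaughtAt CS (replay G y) i ↔ CaughtAt CS (replay G y') i := by
  have hrob : robPos CS (replay G y) i = robPos CS (replay G y') i :=
    congrArg (fun p => p.2.1) (play_replay_congr G CS h)
  rw [CaughtAt, CaughtAt, hrob, copPos_replay_congr CS fun j hj => h j (by omega),
    copPos_replay_congr CS fun j hj => h j (by omega)]

open Classical in
/-- The robber history `a :: t` (most recent first) is replayed against `CS`; once the replayed
robber has been caught, the cop stays on it. -/
noncomputable def shadowMove (G : SimpleGraph W) (CS : CopStrategy W) : List W → W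
  | [] => CS.init
  | a :: t =>
    let RS := replay G fun j => (a :: t).reverse.getD j a
    if ∃ i ≤ t.length, CaughtAt CS RS i then a else copPos CS RS (t.length + 1)

open Classical in
lemma shadowMove_hist_succ (y : ℕ → W) (m : ℕ) :
    shadowMove G CS (hist y (m + 1)) =
      if ∃ i ≤ m, CaughtAt CS (replay G y) i then y m else copPos CS (replay G y) (m + 1) := by
  have hy : ∀ j ≤ m, (hist y (m + 1)).reverse.getD j (y m) = y j :=
    fun j hj => getD_reverse_hist y (by omega) _
  rw [hist_succ] at hy ⊢
  rw [shadowMove, length_hist]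
  refine if_congr ?_ rfl (copPos_replay_congr CS fun j hj => hy j (by omega))
  exact exists_congr fun i => and_congr_right fun hi =>
    caughtAt_replay_congr CS fun j hj => hy j (by omega)

lemma shadowMove_hist_of_forall_not_caughtAt (y : ℕ → W) {q : ℕ}
    (h : ∀ i < q, ¬CaughtAt CS (replay G y) i) :
    shadowMove G CS (hist y q) = copPos CS (replay G y) q := by
  cases q with
  | zero => rfl
  | succ m =>
    rw [shadowMove_hist_succ, if_neg]
    rintro ⟨i, hi, hc⟩
    exact h i (by omega) hc

lemma shadowMove_hist_succ_eq_or_adj (hCS : CS.Legal G) {y : ℕ → W}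
    (hy : ∀ j, y (j + 1) = y j ∨ G.Adj (y j) (y (j + 1))) (q : ℕ) :
    shadowMove G CS (hist y (q + 1)) = shadowMove G CS (hist y q) ∨
      G.Adj (shadowMove G CS (hist y q)) (shadowMove G CS (hist y (q + 1))) := by
  by_cases hq : ∃ i < q, CaughtAt CS (replay G y) i
  · obtain ⟨i, hi, hc⟩ := hq
    obtain ⟨m, rfl⟩ : ∃ m, q = m + 1 := ⟨q - 1, by omega⟩
    rw [shadowMove_hist_succ, shadowMove_hist_succ, if_pos ⟨i, by omega, hc⟩,
      if_pos ⟨i, by omega, hc⟩]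
    exact hy m
  · push Not at hq
    rw [shadowMove_hist_of_forall_not_caughtAt CS y hq, shadowMove_hist_succ]
    split_ifs with hc
    · obtain ⟨i, hi, hci⟩ := hc
      obtain rfl : i = q := by
        by_contra hne
        exact hq i (by omega) hci
      rcases hci with h | h <;> rw [robPos_replay hy] at h
      · exact Or.inl h.symm
      · rw [← h]
        exact copPos_succ_eq_or_adj hCS _ i
    · exact copPos_succ_eq_or_adj hCS _ q

end Shadow

section Events

variable {X : Type*} (x : ℕ → X) (E : ℕ → Prop)

open Classical in
noncomputable def eventHist : ℕ → List X
  | 0 => []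
  | k + 1 => if E k then x k :: eventHist k else eventHist k

open Classical in
/-- The `j`-th recorded value of `x` (values recorded at the rounds where `E` holds); constant
once no further value is ever recorded. -/
noncomputable def eventSeq : ℕ → X
  | 0 => if h : ∃ k, 0 < (eventHist x E (k + 1)).length then x (Nat.find h) else x 0
  | j + 1 =>
    if h : ∃ k, j + 1 < (eventHist x E (k + 1)).length then x (Nat.find h) else eventSeq j

variable {x E}

lemma eventHist_succ_of_pos {k : ℕ} (h : E k) :
    eventHist x E (k + 1) = x k :: eventHist x E k :=
  if_pos h

lemma eventHist_succ_of_neg {k : ℕ} (h : ¬E k) : eventHist x E (k + 1) = eventHist x E k :=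
  if_neg h

lemma length_eventHist_succ_le (k : ℕ) :
    (eventHist x E (k + 1)).length ≤ (eventHist x E k).length + 1 := by
  by_cases h : E k
  · simp [eventHist_succ_of_pos h]
  · simp [eventHist_succ_of_neg h]

lemma length_eventHist_mono : Monotone fun k => (eventHist x E k).length := by
  refine monotone_nat_of_le_succ fun k => ?_
  by_cases h : E k
  · simp [eventHist_succ_of_pos h]
  · simp [eventHist_succ_of_neg h]

lemma length_eventHist_succ_pos (h0 : E 0) (k : ℕ) : 0 < (eventHist x E (k + 1)).length :=
  lt_of_lt_of_le (by simp [eventHist_succ_of_pos h0])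
    (length_eventHist_mono (Nat.le_add_left 1 k))

lemma eventSeq_of_exists {j : ℕ} (h : ∃ k, j < (eventHist x E (k + 1)).length) :
    eventSeq x E j = x (Nat.find h) := by
  cases j <;> simp only [eventSeq, dif_pos h]

lemma eventHist_eq_hist (k : ℕ) :
    eventHist x E k = hist (eventSeq x E) (eventHist x E k).length := by
  induction k with
  | zero => rfl
  | succ k ih =>
    by_cases hE : E k
    · have h : ∃ k', (eventHist x E k).length < (eventHist x E (k' + 1)).length :=
        ⟨k, by simp [eventHist_succ_of_pos hE]⟩
      have hfind : Nat.find h = k := by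
        refine (Nat.find_eq_iff h).mpr ⟨by simp [eventHist_succ_of_pos hE], fun k' hk' => ?_⟩
        exact not_lt.mpr (length_eventHist_mono (show k' + 1 ≤ k by omega))
      rw [eventHist_succ_of_pos hE, List.length_cons, hist_succ, eventSeq_of_exists h, hfind,
        ← ih]
    · rwa [eventHist_succ_of_neg hE]

variable (hstay : ∀ k, ¬E (k + 1) → x (k + 1) = x k)
include hstay

lemma eq_of_mem_head?_eventHist {k : ℕ} {a : X} (ha : a ∈ (eventHist x E (k + 1)).head?) :
    a = x k := by
  induction k with
  | zero =>
    by_cases hE : E 0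
    · simpa [eventHist_succ_of_pos hE] using ha.symm
    · rw [eventHist_succ_of_neg hE] at ha
      simp [eventHist] at ha
  | succ k ih =>
    by_cases hE : E (k + 1)
    · simpa [eventHist_succ_of_pos hE] using ha.symm
    · rw [eventHist_succ_of_neg hE] at ha
      rw [ih ha, hstay k hE]

lemma eventSeq_length_eventHist_sub_one {k : ℕ} (hk : 0 < (eventHist x E (k + 1)).length) :
    eventSeq x E ((eventHist x E (k + 1)).length - 1) = x k := by
  apply eq_of_mem_head?_eventHist hstay
  obtain ⟨m, hm⟩ : ∃ m, (eventHist x E (k + 1)).length = m + 1 :=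
    Nat.exists_eq_succ_of_ne_zero hk.ne'
  rw [eventHist_eq_hist, hm]
  simp

lemma eq_apply_zero_of_eventHist_eq_nil {k : ℕ} (hk : eventHist x E (k + 1) = []) :
    x k = x 0 := by
  induction k with
  | zero => rfl
  | succ k ih =>
    have hE : ¬E (k + 1) := fun hE => by simp [eventHist_succ_of_pos hE] at hk
    rw [eventHist_succ_of_neg hE] at hk
    rw [hstay k hE, ih hk]

lemma eventSeq_succ_eq_or_adj {Γ : SimpleGraph X}
    (hstep : ∀ k, x (k + 1) = x k ∨ Γ.Adj (x k) (x (k + 1))) (j : ℕ) :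
    eventSeq x E (j + 1) = eventSeq x E j ∨ Γ.Adj (eventSeq x E j) (eventSeq x E (j + 1)) := by
  by_cases h : ∃ k, j + 1 < (eventHist x E (k + 1)).length
  · have hk := Nat.find_spec h
    have hlen := length_eventHist_succ_le (x := x) (E := E) (Nat.find h)
    obtain ⟨k, hk'⟩ : ∃ k, Nat.find h = k + 1 := by
      refine Nat.exists_eq_succ_of_ne_zero fun h0 => ?_
      rw [h0] at hk hlen
      have : (eventHist x E 0).length = 0 := rfl
      omega
    have hmin : (eventHist x E (k + 1)).length ≤ j + 1 := not_lt.mp (Nat.find_min h (by omega))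
    rw [hk'] at hk hlen
    have hj : eventSeq x E j = x k := by
      rw [← eventSeq_length_eventHist_sub_one hstay (k := k) (by omega)]
      congr 1
      omega
    rw [eventSeq_of_exists h, hj, hk']
    exact hstep k
  · exact Or.inl (by rw [eventSeq, dif_neg h])

end Events

section Coordinate

variable {X : Type*} {Γ : SimpleGraph X} (CS : CopStrategy X) {x : ℕ → X} {E : ℕ → Prop}

def GameOver (Γ : SimpleGraph X) (CS : CopStrategy X) (x : ℕ → X) (E : ℕ → Prop) (k : ℕ) :
    Prop :=
  ∃ i < (eventHist x E (k + 1)).length, CaughtAt CS (replay Γ (eventSeq x E)) i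

lemma gameOver_mono : Monotone (GameOver Γ CS x E) := fun _ _ hkl ⟨i, hi, hc⟩ =>
  ⟨i, lt_of_lt_of_le hi (length_eventHist_mono (Nat.succ_le_succ hkl)), hc⟩

variable (hstay : ∀ k, ¬E (k + 1) → x (k + 1) = x k)
include hstay

lemma shadowMove_eventHist_of_gameOver {k : ℕ} (h : GameOver Γ CS x E k) :
    shadowMove Γ CS (eventHist x E (k + 1)) = x k := by
  obtain ⟨i, hi, hc⟩ := h
  obtain ⟨m, hm⟩ : ∃ m, (eventHist x E (k + 1)).length = m + 1 :=
    Nat.exists_eq_succ_of_ne_zero (by omega)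
  rw [eventHist_eq_hist, hm, shadowMove_hist_succ, if_pos ⟨i, by omega, hc⟩,
    ← eventSeq_length_eventHist_sub_one hstay (k := k) (by omega), hm, Nat.add_sub_cancel]

variable (hstep : ∀ k, x (k + 1) = x k ∨ Γ.Adj (x k) (x (k + 1)))
include hstep

lemma damages_of_not_gameOver {k : ℕ} (hk : 0 < (eventHist x E (k + 1)).length)
    (h : ¬GameOver Γ CS x E k) : Damages CS (replay Γ (eventSeq x E)) (x k) := by
  rw [damages_iff]
  refine ⟨(eventHist x E (k + 1)).length - 1, ?_, fun i hi hc => h ⟨i, by omega, hc⟩⟩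
  rw [robPos_replay (eventSeq_succ_eq_or_adj hstay hstep),
    eventSeq_length_eventHist_sub_one hstay hk]

lemma shadowMove_eventHist_succ_eq_or_adj (hCS : CS.Legal Γ) (k : ℕ) :
    shadowMove Γ CS (eventHist x E (k + 1)) = shadowMove Γ CS (eventHist x E k) ∨
      Γ.Adj (shadowMove Γ CS (eventHist x E k)) (shadowMove Γ CS (eventHist x E (k + 1))) := by
  by_cases hE : E k
  · have h0 := eventHist_eq_hist (x := x) (E := E) k
    have h1 : eventHist x E (k + 1) = hist (eventSeq x E) ((eventHist x E k).length + 1) := by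
      rw [eventHist_eq_hist (k + 1), eventHist_succ_of_pos hE, List.length_cons]
    generalize (eventHist x E k).length = n at h0 h1
    rw [h0, h1]
    exact shadowMove_hist_succ_eq_or_adj CS hCS (eventSeq_succ_eq_or_adj hstay hstep) n
  · rw [eventHist_succ_of_neg hE]
    exact Or.inl rfl

end Coordinate

section BoxProduct

variable {α β : Type*} {G : SimpleGraph α} {H : SimpleGraph β}

lemma fst_eq_or_adj_of_boxProd {p q : α × β} (h : q = p ∨ (G □ H).Adj p q) :
    q.1 = p.1 ∨ G.Adj p.1 q.1 := by
  rcases h with rfl | (⟨h, -⟩ | ⟨-, h⟩)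
  exacts [Or.inl rfl, Or.inr h, Or.inl h.symm]

lemma snd_eq_or_adj_of_boxProd {p q : α × β} (h : q = p ∨ (G □ H).Adj p q) :
    q.2 = p.2 ∨ H.Adj p.2 q.2 := by
  rcases h with rfl | (⟨-, h⟩ | ⟨h, -⟩)
  exacts [Or.inl rfl, Or.inl h.symm, Or.inr h]

lemma snd_eq_of_boxProd_of_fst_ne {p q : α × β} (h : q = p ∨ (G □ H).Adj p q)
    (hne : q.1 ≠ p.1) : q.2 = p.2 := by
  rcases h with rfl | (⟨-, h⟩ | ⟨-, h⟩)
  exacts [rfl, h.symm, absurd h.symm hne]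

def MovesInFst (r : ℕ → α × β) : ℕ → Prop
  | 0 => True
  | k + 1 => (r (k + 1)).1 ≠ (r k).1

open Classical in
noncomputable def fstEvents : List (α × β) → List α
  | [] => []
  | [p] => [p.1]
  | p :: q :: t => if p.1 = q.1 then fstEvents (q :: t) else p.1 :: fstEvents (q :: t)

open Classical in
noncomputable def sndEvents : List (α × β) → List β
  | [] => []
  | [_] => []
  | p :: q :: t => if p.1 = q.1 then p.2 :: sndEvents (q :: t) else sndEvents (q :: t)

lemma fstEvents_hist (r : ℕ → α × β) (k : ℕ) :
    fstEvents (hist r k) = eventHist (fun k => (r k).1) (MovesInFst r) k := by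
  induction k with
  | zero => rfl
  | succ k ih =>
    cases k with
    | zero => exact (eventHist_succ_of_pos (x := fun k => (r k).1) (k := 0) trivial).symm
    | succ k =>
      rw [hist_succ, hist_succ, fstEvents, ← hist_succ, ih]
      by_cases h : (r (k + 1)).1 = (r k).1
      · rw [if_pos h, eventHist_succ_of_neg (show ¬MovesInFst r (k + 1) from not_not.mpr h)]
      · rw [if_neg h, eventHist_succ_of_pos (show MovesInFst r (k + 1) from h)]

lemma sndEvents_hist (r : ℕ → α × β) (k : ℕ) :
    sndEvents (hist r k) = eventHist (fun k => (r k).2) (fun k => ¬MovesInFst r k) k := by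
  induction k with
  | zero => rfl
  | succ k ih =>
    cases k with
    | zero =>
      exact (eventHist_succ_of_neg (E := fun k => ¬MovesInFst r k) (k := 0)
        (not_not.mpr trivial)).symm
    | succ k =>
      rw [hist_succ, hist_succ, sndEvents, ← hist_succ, ih]
      by_cases h : (r (k + 1)).1 = (r k).1
      · rw [if_pos h, eventHist_succ_of_pos (E := fun k => ¬MovesInFst r k) (k := k + 1)
          (not_not.mpr h)]
      · rw [if_neg h, eventHist_succ_of_neg (E := fun k => ¬MovesInFst r k) (k := k + 1)
          (not_not.mpr h)]

lemma snd_eq_of_movesInFst {r : ℕ → α × β}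
    (hr : ∀ k, r (k + 1) = r k ∨ (G □ H).Adj (r k) (r (k + 1))) (k : ℕ)
    (h : ¬¬MovesInFst r (k + 1)) : (r (k + 1)).2 = (r k).2 :=
  snd_eq_of_boxProd_of_fst_ne (hr k) (not_not.mp h)

variable (G H) (CSG : CopStrategy α) (CSH : CopStrategy β)

noncomputable def boxTarget (rh : List (α × β)) : α × β :=
  (shadowMove G CSG (fstEvents rh), shadowMove H CSH (sndEvents rh))

open Classical in
/-- The guard never fires in a play against a legal robber (`boxTarget_hist_succ_eq_or_adj`);
it only makes the strategy legal on all histories. -/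
noncomputable def boxCop : CopStrategy (α × β) where
  init := (CSG.init, CSH.init)
  move ch rh := match ch with
    | [] => (CSG.init, CSH.init)
    | c :: _ =>
      if boxTarget G H CSG CSH rh = c ∨ (G □ H).Adj c (boxTarget G H CSG CSH rh) then
        boxTarget G H CSG CSH rh
      else c

open Classical in
lemma boxCop_move_cons (c : α × β) (ch rh : List (α × β)) :
    (boxCop G H CSG CSH).move (c :: ch) rh =
      if boxTarget G H CSG CSH rh = c ∨ (G □ H).Adj c (boxTarget G H CSG CSH rh) then
        boxTarget G H CSG CSH rh
      else c :=
  rfl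

lemma boxCop_legal : (boxCop G H CSG CSH).Legal (G □ H) := by
  intro c _ rh
  rw [boxCop_move_cons]
  split_ifs with h
  · exact h
  · exact Or.inl rfl

variable {G H CSG CSH}

lemma boxTarget_hist_succ_eq_or_adj (hCSG : CSG.Legal G) (hCSH : CSH.Legal H)
    {r : ℕ → α × β} (hr : ∀ k, r (k + 1) = r k ∨ (G □ H).Adj (r k) (r (k + 1))) (k : ℕ) :
    boxTarget G H CSG CSH (hist r (k + 1)) = boxTarget G H CSG CSH (hist r k) ∨
      (G □ H).Adj (boxTarget G H CSG CSH (hist r k))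
        (boxTarget G H CSG CSH (hist r (k + 1))) := by
  have hG := shadowMove_eventHist_succ_eq_or_adj CSG (x := fun k => (r k).1)
    (E := MovesInFst r) (fun _ => not_not.mp)
    (fun k => fst_eq_or_adj_of_boxProd (hr k)) hCSG k
  have hH := shadowMove_eventHist_succ_eq_or_adj CSH (x := fun k => (r k).2)
    (E := fun k => ¬MovesInFst r k) (snd_eq_of_movesInFst hr)
    (fun k => snd_eq_or_adj_of_boxProd (hr k)) hCSH k
  simp only [boxTarget, fstEvents_hist, sndEvents_hist, Prod.ext_iff, boxProd_adj] at hG hH ⊢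
  by_cases hM : MovesInFst r k
  · rw [eventHist_succ_of_neg (E := fun k => ¬MovesInFst r k) (k := k) (not_not.mpr hM)]
      at hH ⊢
    tauto
  · rw [eventHist_succ_of_neg hM] at hG ⊢
    tauto

lemma copPos_boxCop (hCSG : CSG.Legal G) (hCSH : CSH.Legal H) {RS : RobberStrategy (α × β)}
    (hRS : RS.Legal (G □ H)) (k : ℕ) :
    copPos (boxCop G H CSG CSH) RS k =
      boxTarget G H CSG CSH (hist (robPos (boxCop G H CSG CSH) RS) k) := by
  induction k with
  | zero => rfl
  | succ k ih =>
    rw [copPos_succ, hist_succ (copPos _ _), boxCop_move_cons, ih,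
      if_pos (boxTarget_hist_succ_eq_or_adj hCSG hCSH (robPos_succ_eq_or_adj _ hRS) k)]

lemma exists_not_gameOver_and_of_mem_damageSet (hCSG : CSG.Legal G) (hCSH : CSH.Legal H)
    {RS : RobberStrategy (α × β)} (hRS : RS.Legal (G □ H)) {r : ℕ → α × β}
    (hr : robPos (boxCop G H CSG CSH) RS = r) {v : α × β}
    (hv : v ∈ damageSet (boxCop G H CSG CSH) RS) :
    ∃ s, r s = v ∧ ¬(GameOver G CSG (fun k => (r k).1) (MovesInFst r) s ∧
      GameOver H CSH (fun k => (r k).2) (fun k => ¬MovesInFst r k) s) := by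
  have hstep : ∀ k, r (k + 1) = r k ∨ (G □ H).Adj (r k) (r (k + 1)) :=
    hr ▸ robPos_succ_eq_or_adj _ hRS
  obtain ⟨s, rfl, hs⟩ := hv
  refine ⟨s, hr ▸ rfl, fun ⟨hG, hH⟩ => (hs s le_rfl).2 ?_⟩
  rw [copPos_boxCop hCSG hCSH hRS, hr, boxTarget, fstEvents_hist, sndEvents_hist,
    shadowMove_eventHist_of_gameOver CSG (fun _ => not_not.mp) hG,
    shadowMove_eventHist_of_gameOver CSH (snd_eq_of_movesInFst hstep) hH]

lemma damageSet_boxCop_subset (hCSG : CSG.Legal G) (hCSH : CSH.Legal H)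
    {RS : RobberStrategy (α × β)} (hRS : RS.Legal (G □ H)) {r : ℕ → α × β}
    (hr : robPos (boxCop G H CSG CSH) RS = r) :
    damageSet (boxCop G H CSG CSH) RS ⊆
        damageSet CSG (replay G (eventSeq (fun k => (r k).1) (MovesInFst r))) ×ˢ Set.univ ∨
      damageSet (boxCop G H CSG CSH) RS ⊆ Set.univ ×ˢ insert (r 0).2
        (damageSet CSH (replay H (eventSeq (fun k => (r k).2) (fun k => ¬MovesInFst r k)))) := by
  have hstep : ∀ k, r (k + 1) = r k ∨ (G □ H).Adj (r k) (r (k + 1)) :=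
    hr ▸ robPos_succ_eq_or_adj _ hRS
  rcases (isUpperSet_setOfPred.mpr (gameOver_mono CSG)).total
    (isUpperSet_setOfPred.mpr (gameOver_mono CSH)) with hGH | hHG
  · left
    intro v hv
    obtain ⟨s, rfl, hs⟩ := exists_not_gameOver_and_of_mem_damageSet hCSG hCSH hRS hr hv
    exact ⟨damages_of_not_gameOver CSG (fun _ => not_not.mp)
      (fun k => fst_eq_or_adj_of_boxProd (hstep k)) (length_eventHist_succ_pos trivial s)
      fun h => hs ⟨h, hGH h⟩, trivial⟩
  · right
    intro v hv
    obtain ⟨s, rfl, hs⟩ := exists_not_gameOver_and_of_mem_damageSet hCSG hCSH hRS hr hv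
    refine ⟨trivial, ?_⟩
    by_cases hnil : eventHist (fun k => (r k).2) (fun k => ¬MovesInFst r k) (s + 1) = []
    · exact Or.inl (eq_apply_zero_of_eventHist_eq_nil (snd_eq_of_movesInFst hstep) hnil)
    · exact Or.inr (damages_of_not_gameOver CSH (snd_eq_of_movesInFst hstep)
        (fun k => snd_eq_or_adj_of_boxProd (hstep k)) (List.length_pos_of_ne_nil hnil)
        fun h => hs ⟨hHG h, h⟩)

end BoxProduct

lemma dmg_eq_zero_of_isEmpty [IsEmpty V] (G : SimpleGraph V) : dmg G = 0 := by
  rw [dmg, Nat.sInf_eq_zero]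
  exact Or.inr (Set.eq_empty_of_forall_notMem fun _ ⟨CS, _⟩ => isEmptyElim CS.init)

lemma exists_legal_ncard_damageSet_le_dmg [Finite V] [Nonempty V] (G : SimpleGraph V) :
    ∃ CS : CopStrategy V, CS.Legal G ∧
      ∀ RS : RobberStrategy V, RS.Legal G → (damageSet CS RS).ncard ≤ dmg G := by
  obtain ⟨v⟩ := ‹Nonempty V›
  refine Nat.sInf_mem (s := {n | ∃ CS : CopStrategy V, CS.Legal G ∧
    ∀ RS : RobberStrategy V, RS.Legal G → (damageSet CS RS).ncard ≤ n}) ?_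
  exact ⟨Nat.card V, ⟨v, fun ch _ => ch.headD v⟩, fun _ _ _ => Or.inl rfl,
    fun _ _ => Set.ncard_le_card _⟩

lemma ncard_le_max_of_subset_or_subset {α β : Type*} [Fintype α] [Fintype β] {S : Set (α × β)}
    {D : Set α} {D' : Set β} {b : β} {A B : ℕ} (hD : D.ncard ≤ A) (hD' : D'.ncard ≤ B)
    (h : S ⊆ D ×ˢ Set.univ ∨ S ⊆ Set.univ ×ˢ insert b D') :
    S.ncard ≤ max (A * Fintype.card β) ((B + 1) * Fintype.card α) := by
  rcases h with h | h
  · calc S.ncard ≤ (D ×ˢ Set.univ).ncard := Set.ncard_le_ncard h (Set.toFinite _)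
      _ = D.ncard * Fintype.card β := by
        rw [Set.ncard_prod, Set.ncard_univ, Nat.card_eq_fintype_card]
      _ ≤ A * Fintype.card β := Nat.mul_le_mul_right _ hD
      _ ≤ _ := le_max_left _ _
  · calc S.ncard ≤ (Set.univ ×ˢ insert b D').ncard := Set.ncard_le_ncard h (Set.toFinite _)
      _ = (insert b D').ncard * Fintype.card α := by
        rw [Set.ncard_prod, Set.ncard_univ, Nat.card_eq_fintype_card, mul_comm]
      _ ≤ (B + 1) * Fintype.card α :=
        Nat.mul_le_mul_right _ ((Set.ncard_insert_le b D').trans (Nat.add_le_add_right hD' 1))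
      _ ≤ _ := le_max_right _ _

theorem dmg_boxProd_le_max'_general {α β : Type*} [Fintype α] [Fintype β]
    (G : SimpleGraph α) (H : SimpleGraph β) :
    dmg (G □ H) ≤ max (dmg G * Fintype.card β) ((dmg H + 1) * Fintype.card α) := by
  rcases isEmpty_or_nonempty α with _ | _
  · exact (dmg_eq_zero_of_isEmpty _).trans_le (Nat.zero_le _)
  rcases isEmpty_or_nonempty β with _ | _
  · exact (dmg_eq_zero_of_isEmpty _).trans_le (Nat.zero_le _)
  obtain ⟨CSG, hCSG, hG⟩ := exists_legal_ncard_damageSet_le_dmg G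
  obtain ⟨CSH, hCSH, hH⟩ := exists_legal_ncard_damageSet_le_dmg H
  refine Nat.sInf_le ⟨boxCop G H CSG CSH, boxCop_legal G H CSG CSH, fun RS hRS => ?_⟩
  exact ncard_le_max_of_subset_or_subset (hG _ (replay_legal _ _)) (hH _ (replay_legal _ _))
    (damageSet_boxCop_subset hCSG hCSH hRS rfl)

/-- For any finite connected graphs `G` and `H`,
`dmg(G □ H) ≤ max {dmg(G)·|V(H)|, (dmg(H)+1)·|V(G)|}`. -/
theorem dmg_boxProd_le_max' {α β : Type*} [Fintype α] [Fintype β]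
    (G : SimpleGraph α) (H : SimpleGraph β) (hG : G.Connected) (hH : H.Connected) :
    dmg (G □ H) ≤ max (dmg G * Fintype.card β) ((dmg H + 1) * Fintype.card α) :=
  dmg_boxProd_le_max'_general G H
end

section
/- For a finite connected simple graph G, dmg(G) = 1 if and only if rad(G) = 2 and there exists a center vertex c of G such that for every w ∈ V(G) \ N[c] there exists s ∈ N[c] with N(w) ⊆ N[s] (i.e., s dominates w). -/
open SimpleGraph

variable {V : Type*}

/-- The closed neighbourhood `N[v]` of a vertex, as a set. -/
def cN (G : SimpleGraph V) (v : V) : Set V := insert v (G.neighborSet v)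

/-- `v` dominates `u` if `N(u) ⊆ N[v]`. -/
def Dominates (G : SimpleGraph V) (v u : V) : Prop :=
  G.neighborSet u ⊆ cN G v

/- The cop wins with damage at most one exactly from a vertex `c` each of whose far vertices `w`
is dominated by some `s ∈ N[c]`: against a robber starting at `w` the cop steps to `s`, after
which every move of the robber lands in `N[s]` and is punished, so it can only damage `w`.
Conversely, if the cop's first reply `s` to a robber at `w ∉ N[c]` does not dominate `w`, the
robber steps to a neighbour `t ∉ N[s]` and damages both `w` and `t`. Damage zero is possible
exactly when some `N[v]` is the whole graph, i.e. when the radius is at most one, and the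
domination condition at `c` forces `ecc c ≤ 2`. -/

section Game

variable {G : SimpleGraph V}

lemma mem_cN {v w : V} : w ∈ cN G v ↔ w = v ∨ G.Adj v w := Iff.rfl

lemma self_mem_cN (v : V) : v ∈ cN G v := Set.mem_insert v _

lemma CopStrategy.Legal.copPos_succ_mem_cN {CS : CopStrategy V} (hCS : CS.Legal G)
    (RS : RobberStrategy V) (n : ℕ) : copPos CS RS (n + 1) ∈ cN G (copPos CS RS n) :=
  hCS _ _ _

lemma RobberStrategy.Legal.robPos_succ_mem_cN {RS : RobberStrategy V} (hRS : RS.Legal G)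
    (CS : CopStrategy V) (n : ℕ) : robPos CS RS (n + 1) ∈ cN G (robPos CS RS n) :=
  hRS _ _ _

/-- The robber, standing on `robPos CS RS n`, has survived up to and including the cop's move in
round `n + 1`; `Damages CS RS v` says `v = robPos CS RS n` for such an `n`. -/
def Uncaught (CS : CopStrategy V) (RS : RobberStrategy V) (n : ℕ) : Prop :=
  ∀ k ≤ n, copPos CS RS k ≠ robPos CS RS k ∧ copPos CS RS (k + 1) ≠ robPos CS RS k

lemma Uncaught.mono {CS : CopStrategy V} {RS : RobberStrategy V} {m n : ℕ}
    (h : Uncaught CS RS n) (hmn : m ≤ n) : Uncaught CS RS m :=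
  fun k hk => h k (hk.trans hmn)

lemma Uncaught.copPos_succ_ne {CS : CopStrategy V} {RS : RobberStrategy V} {n : ℕ}
    (h : Uncaught CS RS n) : copPos CS RS (n + 1) ≠ robPos CS RS n :=
  (h n le_rfl).2

def RobberStrategy.ofFun (r₀ : V) (f : V → V) : RobberStrategy V where
  init _ := r₀
  move _ rh := f (rh.headD r₀)

lemma RobberStrategy.ofFun_legal {r₀ : V} {f : V → V} (hf : ∀ r, f r ∈ cN G r) :
    (RobberStrategy.ofFun r₀ f).Legal G :=
  fun r _ _ => hf r

lemma uncaught_zero_of_init_not_mem_cN {CS : CopStrategy V} (hCS : CS.Legal G)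
    {RS : RobberStrategy V} (hfar : RS.init CS.init ∉ cN G CS.init) : Uncaught CS RS 0 := by
  intro k hk
  obtain rfl : k = 0 := Nat.le_zero.mp hk
  constructor
  · rintro (h : CS.init = RS.init CS.init)
    exact hfar (h ▸ self_mem_cN CS.init)
  · rintro (h : copPos CS RS 1 = RS.init CS.init)
    exact hfar (h ▸ hCS.copPos_succ_mem_cN RS 0)

lemma init_mem_damageSet {CS : CopStrategy V} (hCS : CS.Legal G) {RS : RobberStrategy V}
    (hfar : RS.init CS.init ∉ cN G CS.init) : RS.init CS.init ∈ damageSet CS RS :=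
  ⟨0, rfl, uncaught_zero_of_init_not_mem_cN hCS hfar⟩

def CanLimitDamage (G : SimpleGraph V) (n : ℕ) : Prop :=
  ∃ CS : CopStrategy V, CS.Legal G ∧
    ∀ RS : RobberStrategy V, RS.Legal G → (damageSet CS RS).ncard ≤ n

lemma CanLimitDamage.mono {m n : ℕ} (h : CanLimitDamage G m) (hmn : m ≤ n) :
    CanLimitDamage G n := by
  obtain ⟨CS, hCS, hB⟩ := h
  exact ⟨CS, hCS, fun RS hRS => (hB RS hRS).trans hmn⟩

lemma dmg_eq_one_iff_canLimitDamage :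
    dmg G = 1 ↔ CanLimitDamage G 1 ∧ ¬ CanLimitDamage G 0 :=
  Nat.sInf_upward_closed_eq_succ_iff (fun _ _ hmn h => CanLimitDamage.mono h hmn) 0

open Classical in
noncomputable def CopStrategy.chase (G : SimpleGraph V) (c₀ : V) (target : V → V) :
    CopStrategy V where
  init := c₀
  move ch rh :=
    let c := ch.headD c₀
    let r := rh.headD c₀
    if r ∈ cN G c then r else if target r ∈ cN G c then target r else c

open Classical in
lemma CopStrategy.chase_legal (c₀ : V) (target : V → V) : (chase G c₀ target).Legal G := by
  intro c _ rh
  show (if rh.headD c₀ ∈ cN G c then _ else _) ∈ cN G c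
  split_ifs with h₁ h₂
  exacts [h₁, h₂, self_mem_cN c]

section Chase

variable {c₀ : V} {target : V → V} {RS : RobberStrategy V} {n : ℕ}

lemma copPos_chase_succ_of_mem
    (h : robPos (.chase G c₀ target) RS n ∈ cN G (copPos (.chase G c₀ target) RS n)) :
    copPos (.chase G c₀ target) RS (n + 1) = robPos (.chase G c₀ target) RS n :=
  if_pos h

lemma copPos_chase_succ_of_not_mem
    (h : robPos (.chase G c₀ target) RS n ∉ cN G (copPos (.chase G c₀ target) RS n))
    (ht : target (robPos (.chase G c₀ target) RS n) ∈
      cN G (copPos (.chase G c₀ target) RS n)) :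
    copPos (.chase G c₀ target) RS (n + 1) = target (robPos (.chase G c₀ target) RS n) :=
  (if_neg h).trans (if_pos ht)

lemma damageSet_chase_eq_empty (h : RS.init c₀ ∈ cN G c₀) :
    damageSet (.chase G c₀ target) RS = ∅ := by
  refine Set.eq_empty_of_forall_notMem fun v ⟨n, _, (hn : Uncaught _ _ n)⟩ => ?_
  exact (hn.mono n.zero_le).copPos_succ_ne (copPos_chase_succ_of_mem h)

lemma chase_guards (hRS : RS.Legal G) {r : V} (hdom : Dominates G (target r) r)
    (h₀ : robPos (.chase G c₀ target) RS 0 = r)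
    (h₁ : copPos (.chase G c₀ target) RS 1 = target r) :
    ∀ n, Uncaught (.chase G c₀ target) RS n →
      copPos (.chase G c₀ target) RS (n + 1) = target r ∧ robPos (.chase G c₀ target) RS n = r
  | 0, _ => ⟨h₁, h₀⟩
  | n + 1, hn => by
    obtain ⟨hcop, hrob⟩ := chase_guards hRS hdom h₀ h₁ n (hn.mono n.le_succ)
    have hfar : robPos (.chase G c₀ target) RS (n + 1) ∉ cN G (target r) := fun h =>
      hn.copPos_succ_ne (copPos_chase_succ_of_mem (hcop ▸ h))
    have hstay : robPos (.chase G c₀ target) RS (n + 1) = r := by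
      rcases mem_cN.mp (hRS.robPos_succ_mem_cN _ n) with h | h
      · exact h.trans hrob
      · exact absurd (hdom (hrob ▸ h)) hfar
    refine ⟨?_, hstay⟩
    rw [copPos_chase_succ_of_not_mem (hcop ▸ hstay ▸ hfar) (hcop ▸ hstay ▸ self_mem_cN _),
      hstay]

end Chase

def ClosedNbhdDominates (G : SimpleGraph V) (c : V) : Prop :=
  ∀ w ∉ cN G c, ∃ s ∈ cN G c, Dominates G s w

lemma canLimitDamage_one_of_closedNbhdDominates {c : V} (hc : ClosedNbhdDominates G c) :
    CanLimitDamage G 1 := by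
  choose! dominator hmem hdom using hc
  refine ⟨.chase G c dominator, CopStrategy.chase_legal c dominator, fun RS hRS => ?_⟩
  suffices damageSet (.chase G c dominator) RS ⊆ {RS.init c} from
    (Set.ncard_le_ncard this (Set.finite_singleton _)).trans (Set.ncard_singleton _).le
  by_cases hnear : RS.init c ∈ cN G c
  · simp [damageSet_chase_eq_empty hnear]
  have h₁ : copPos (.chase G c dominator) RS 1 = dominator (RS.init c) :=
    copPos_chase_succ_of_not_mem hnear (hmem _ hnear)
  rintro v ⟨n, rfl, hn⟩
  exact (chase_guards hRS (hdom _ hnear) rfl h₁ n hn).2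

lemma dominates_move_init_of_damage_le_one [Finite V] {CS : CopStrategy V} (hCS : CS.Legal G)
    (hB : ∀ RS : RobberStrategy V, RS.Legal G → (damageSet CS RS).ncard ≤ 1)
    {w : V} (hw : w ∉ cN G CS.init) : Dominates G (CS.move [CS.init] [w]) w := by
  classical
  intro t ht
  by_contra hts
  let RS := RobberStrategy.ofFun w fun r => if r = w then t else r
  have hRS : RS.Legal G := RobberStrategy.ofFun_legal fun r => by
    split_ifs with h
    exacts [Or.inr (h ▸ ht), self_mem_cN r]
  have h₀ : robPos CS RS 0 = w := rfl
  have h₁ : robPos CS RS 1 = t := if_pos rfl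
  have hcop₁ : copPos CS RS 1 = CS.move [CS.init] [w] := rfl
  have hunc₀ : Uncaught CS RS 0 := uncaught_zero_of_init_not_mem_cN hCS hw
  have hw₀ : w ∈ damageSet CS RS := ⟨0, h₀, hunc₀⟩
  have ht₁ : t ∈ damageSet CS RS := by
    refine ⟨1, h₁, fun k hk => ?_⟩
    rcases Nat.le_one_iff_eq_zero_or_eq_one.mp hk with rfl | rfl
    · exact hunc₀ 0 le_rfl
    refine ⟨fun h => hts (h₁ ▸ h ▸ hcop₁ ▸ self_mem_cN _), fun h => hts ?_⟩
    exact hcop₁ ▸ h₁ ▸ h ▸ hCS.copPos_succ_mem_cN RS 1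
  have h₂ := Set.ncard_le_ncard (Set.insert_subset hw₀ (Set.singleton_subset_iff.mpr ht₁))
  rw [Set.ncard_pair (G.ne_of_adj ht)] at h₂
  have := hB RS hRS
  omega

lemma canLimitDamage_one_iff [Finite V] :
    CanLimitDamage G 1 ↔ ∃ c, ClosedNbhdDominates G c := by
  refine ⟨fun ⟨CS, hCS, hB⟩ => ⟨CS.init, fun w hw => ?_⟩,
    fun ⟨c, hc⟩ => canLimitDamage_one_of_closedNbhdDominates hc⟩
  exact ⟨_, hCS _ [] [w], dominates_move_init_of_damage_le_one hCS hB hw⟩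

lemma canLimitDamage_zero_iff [Finite V] :
    CanLimitDamage G 0 ↔ ∃ v, ∀ w, w ∈ cN G v := by
  refine ⟨fun ⟨CS, hCS, hB⟩ => ⟨CS.init, fun w => ?_⟩, fun ⟨v, hv⟩ => ?_⟩
  · by_contra hw
    have hdamage := init_mem_damageSet hCS (RS := .ofFun w id) hw
    have hpos := (Set.ncard_pos (Set.toFinite _)).mpr ⟨w, hdamage⟩
    have := hB (.ofFun w id) (RobberStrategy.ofFun_legal self_mem_cN)
    omega
  · exact ⟨.chase G v id, CopStrategy.chase_legal v id, fun RS _ => by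
      simp [damageSet_chase_eq_empty (hv _)]⟩

end Game

section Radius

variable {G : SimpleGraph V}

lemma dist_le_one_iff_mem_cN (hG : G.Connected) {v w : V} : G.dist v w ≤ 1 ↔ w ∈ cN G v := by
  rw [Nat.le_one_iff_eq_zero_or_eq_one, hG.dist_eq_zero_iff, dist_eq_one_iff_adj, mem_cN,
    eq_comm]

lemma dist_le_two_of_mem_cN (hG : G.Connected) {c s u : V} (hs : s ∈ cN G c)
    (hu : u ∈ cN G s) : G.dist c u ≤ 2 :=
  hG.dist_triangle.trans <|
    add_le_add ((dist_le_one_iff_mem_cN hG).mpr hs) ((dist_le_one_iff_mem_cN hG).mpr hu)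

lemma ecc_le_iff [Finite V] {v : V} {n : ℕ} : ecc G v ≤ n ↔ ∀ w, G.dist v w ≤ n := by
  refine ⟨fun h w => (le_csSup (Set.finite_range _).bddAbove ⟨w, rfl⟩).trans h,
    fun h => csSup_le ⟨_, v, rfl⟩ ?_⟩
  rintro _ ⟨w, rfl⟩
  exact h w

lemma one_lt_ecc_iff [Finite V] (hG : G.Connected) {v : V} :
    1 < ecc G v ↔ ∃ w, w ∉ cN G v := by
  simp only [← not_le, ecc_le_iff, dist_le_one_iff_mem_cN hG, not_forall]

/-- A vertex `u ∉ N[c]` has a neighbour `x`, and either `x ∈ N[c]` or `u ∈ N(x) ⊆ N[s]` for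
some `s ∈ N[c]`. -/
lemma ecc_le_two_of_closedNbhdDominates [Finite V] (hG : G.Connected) {c : V}
    (hc : ClosedNbhdDominates G c) : ecc G c ≤ 2 := by
  refine ecc_le_iff.mpr fun u => ?_
  by_cases hu : u ∈ cN G c
  · exact ((dist_le_one_iff_mem_cN hG).mpr hu).trans one_le_two
  have : Nontrivial V := nontrivial_of_ne u c fun h => hu (mem_cN.mpr (Or.inl h))
  obtain ⟨x, hux⟩ := hG.preconnected.exists_adj_of_nontrivial u
  by_cases hx : x ∈ cN G c
  · exact dist_le_two_of_mem_cN hG hx (mem_cN.mpr (Or.inr hux.symm))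
  · obtain ⟨s, hs, hdom⟩ := hc x hx
    exact dist_le_two_of_mem_cN hG hs (hdom hux.symm)

lemma gRadius_le_ecc (v : V) : gRadius G ≤ ecc G v := Nat.sInf_le ⟨v, rfl⟩

lemma le_gRadius_iff [Nonempty V] {n : ℕ} : n ≤ gRadius G ↔ ∀ v, n ≤ ecc G v := by
  refine ⟨fun h v => h.trans (gRadius_le_ecc v), fun h => ?_⟩
  obtain ⟨v, hv⟩ := Nat.sInf_mem (Set.range_nonempty (ecc G))
  exact (h v).trans_eq hv

lemma gRadius_eq_two_and_exists_center_iff [Finite V] (hG : G.Connected) :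
    (gRadius G = 2 ∧ ∃ c, ecc G c = gRadius G ∧ ClosedNbhdDominates G c) ↔
      (∃ c, ClosedNbhdDominates G c) ∧ ∀ v, 1 < ecc G v := by
  have : Nonempty V := hG.nonempty
  constructor
  · rintro ⟨hrad, c, -, hc⟩
    exact ⟨⟨c, hc⟩, le_gRadius_iff.mp hrad.ge⟩
  · rintro ⟨⟨c, hc⟩, hecc⟩
    have hrad₂ : 2 ≤ gRadius G := le_gRadius_iff.mpr hecc
    have hc₂ := ecc_le_two_of_closedNbhdDominates hG hc
    have hrad_le := gRadius_le_ecc (G := G) c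
    exact ⟨by omega, c, by omega, hc⟩

end Radius

/-- For a finite connected graph `G`, `dmg(G) = 1` if and only if `rad(G) = 2` and some
center `c` of `G` is such that every `w ∈ V(G) \ N[c]` is dominated by some
`s ∈ N[c]`. -/
theorem dmg_eq_one_iff {V : Type*} [Fintype V] (G : SimpleGraph V) (hG : G.Connected) :
    dmg G = 1 ↔ gRadius G = 2 ∧ ∃ c : V, ecc G c = gRadius G ∧
      ∀ w ∉ cN G c, ∃ s ∈ cN G c, Dominates G s w := by
  rw [dmg_eq_one_iff_canLimitDamage, canLimitDamage_one_iff, canLimitDamage_zero_iff]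
  refine Iff.trans ?_ (gRadius_eq_two_and_exists_center_iff hG).symm
  simp only [one_lt_ecc_iff hG, not_exists, not_forall]
end
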